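/- arXiv:2507.18059 — 2 statements merged into one kernel-verified Lean document; each statement's English description precedes it below -/
import Mathlib

section
/- Let X be a finite set, μ a probability distribution on X with full support, and π, π' probability distributions on X. If KL(π ‖ μ) ≥ KL(π' ‖ μ), and μ(x) = π(x)·exp(η·q(x))/Z for some function q : X → ℝ, constant η > 0, and normalizer Z (with π having full support), then η·(Σ_x q(x)·π'(x) − Σ_x q(x)·π(x)) ≥ KL(π' ‖ π). -/
open Finset

/-- Kullback–Leibler divergence on a finite set. -/
noncomputable def KL {X : Type*} [Fintype X] (p q : X → ℝ) : ℝ :=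
  ∑ x, p x * Real.log (p x / q x)

/-- A probability distribution on a finite set. -/
def IsProbDist {X : Type*} [Fintype X] (p : X → ℝ) : Prop :=
  (∀ x, 0 ≤ p x) ∧ ∑ x, p x = 1

/-- If `KL(π ‖ μ) ≥ KL(π' ‖ μ)` and `μ(x) = π(x) exp(η q(x))/Z`, then
`η (⟨q, π'⟩ − ⟨q, π⟩) ≥ KL(π' ‖ π)`. -/
theorem kl_projection_improvement
    {X : Type*} [Fintype X]
    (μ π π' : X → ℝ)
    (hμ : IsProbDist μ) (hμfull : ∀ x, 0 < μ x)
    (hπ : IsProbDist π) (hπ' : IsProbDist π')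
    (hπfull : ∀ x, 0 < π x)
    (q : X → ℝ) (η : ℝ) (hη : 0 < η) (Z : ℝ)
    (htilt : ∀ x, μ x = π x * Real.exp (η * q x) / Z)
    (hKL : KL π' μ ≤ KL π μ) :
    η * ((∑ x, q x * π' x) - ∑ x, q x * π x) ≥ KL π' π := by
  obtain ⟨hμ0, hμ1⟩ := hμ
  obtain ⟨hπ0, hπ1⟩ := hπ
  obtain ⟨hπ'0, hπ'1⟩ := hπ'
  have hX : Nonempty X := by
    by_contra h
    rw [not_nonempty_iff] at h
    simp [Finset.univ_eq_empty] at hμ1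
  obtain ⟨x0⟩ := hX
  have hZ : 0 < Z := by
    have h := hμfull x0
    rw [htilt x0] at h
    rcases div_pos_iff.mp h with ⟨_, hz⟩ | ⟨ha, _⟩
    · exact hz
    · exact absurd (mul_pos (hπfull x0) (Real.exp_pos _)) (not_lt.mpr ha.le)
  have key : ∀ x, Real.log (π x / μ x) = Real.log Z - η * q x := by
    intro x
    have hπx := hπfull x
    have hex := Real.exp_pos (η * q x)
    have h1 : π x / μ x = Z / Real.exp (η * q x) := by
      rw [htilt x]; field_simp
    rw [h1, Real.log_div hZ.ne' hex.ne', Real.log_exp]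
  have hA : KL π μ = Real.log Z - η * ∑ x, q x * π x := by
    unfold KL
    have : ∀ x ∈ Finset.univ, π x * Real.log (π x / μ x)
        = Real.log Z * π x - η * (q x * π x) := by
      intro x _
      rw [key x]; ring
    rw [Finset.sum_congr rfl this, Finset.sum_sub_distrib, ← Finset.mul_sum,
      ← Finset.mul_sum, hπ1, mul_one]
  have hB : KL π' μ = KL π' π + Real.log Z - η * ∑ x, q x * π' x := by
    unfold KL
    have hterm : ∀ x ∈ Finset.univ, π' x * Real.log (π' x / μ x)
        = π' x * Real.log (π' x / π x) + (Real.log Z * π' x - η * (q x * π' x)) := by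
      intro x _
      rcases eq_or_lt_of_le (hπ'0 x) with h | h
      · simp [← h]
      · have h1 : π' x / μ x = (π' x / π x) * (π x / μ x) := by
          have := (hμfull x).ne'
          have := (hπfull x).ne'
          field_simp
        rw [h1, Real.log_mul (div_pos h (hπfull x)).ne'
          (div_pos (hπfull x) (hμfull x)).ne', key x]
        ring
    rw [Finset.sum_congr rfl hterm, Finset.sum_add_distrib, Finset.sum_sub_distrib,
      ← Finset.mul_sum, ← Finset.mul_sum, hπ'1, mul_one]
    ring
  have hmul : η * ((∑ x, q x * π' x) - ∑ x, q x * π x)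
      = η * (∑ x, q x * π' x) - η * (∑ x, q x * π x) := by ring
  rw [ge_iff_le, hmul]
  rw [hA, hB] at hKL
  linarith
end

section
/- Let A₁, ..., Aₙ be finite sets, π = ∏ⱼ πⱼ a full-support product distribution, Q : ∏ⱼ Aⱼ → ℝ, η > 0, and μ̂ the tilted distribution μ̂(a) ∝ π(a)·exp(η·Q(a)). Define sequentially π'ⱼ = argmin over distributions on Aⱼ of E_{(a₁,...,a_{j−1}) ∼ π'₁⊗⋯⊗π'_{j−1}} [ KL(· ‖ μ̂ⱼ(·|a₁,...,a_{j−1})) ], where μ̂ⱼ are the autoregressive conditionals of μ̂. Then π'ⱼ(aⱼ) maximizes E_{a_{1:j−1}∼π'_{1:j−1}, aⱼ∼π'ⱼ}[ Aⱼ^π(a_{1:j−1}, aⱼ) ] − (1/η)·KL(π'ⱼ ‖ πⱼ), where Aⱼ^π is the sequential multi-agent advantage Qⱼ(a_{1:j}) − Q_{j−1}(a_{1:j−1}) with Qⱼ(a_{1:j}) = E_{a_{j+1:n}∼π_{j+1:n}}[Q(a)]. -/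
open Finset

/-- `Qpre π Q m a`: expected value of `Q` with the first `m` coordinates fixed by `a`
and the rest drawn from the product distribution `π`. -/
noncomputable def Qpre {n : ℕ} {A : Fin n → Type*} [∀ j, Fintype (A j)]
    (π : (j : Fin n) → A j → ℝ) (Q : ((j : Fin n) → A j) → ℝ)
    (m : ℕ) (a : (j : Fin n) → A j) : ℝ :=
  ∑ b : (j : Fin n) → A j,
    (∏ i ∈ Finset.univ.filter (fun i : Fin n => m ≤ i.val), π i (b i)) *
      Q (fun i => if i.val < m then a i else b i)

/-- Sequential update corollary of MAGPO (single-state form). Let `μ̂ ∝ π exp(ηQ)` and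
let `μc j a` be its autoregressive conditionals,
`μc j a x = πⱼ(x) exp(η Aⱼ^π(a_{1:j-1},x)) / zⱼ(a_{1:j-1})` with the sequential advantage
`Aⱼ^π(a_{1:j-1},x) = Qⱼ(a_{1:j-1},x) − Q_{j-1}(a_{1:j-1})`. If for each `j` the
distribution `π'ⱼ` minimizes, over probability distributions `p` on `Aⱼ`, the expected
(over prefixes drawn from `π'`) KL divergence to the conditional `μc j ·`, then `π'ⱼ`
maximizes the KL-regularized expected sequential advantage
`E_{a_{1:j-1}∼π', x∼p}[Aⱼ^π] − (1/η) KL(p ‖ πⱼ)`. -/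
theorem magpo_sequential_update
    {n : ℕ} {A : Fin n → Type*} [∀ j, Fintype (A j)]
    (π : (j : Fin n) → A j → ℝ)
    (hπ : ∀ j, (∀ x, 0 < π j x) ∧ ∑ x, π j x = 1)
    (Q : ((j : Fin n) → A j) → ℝ) (η : ℝ) (hη : 0 < η)
    (z : (j : Fin n) → ((i : Fin n) → A i) → ℝ)
    (hz : ∀ j a, z j a = ∑ x : A j, π j x *
        Real.exp (η * (Qpre π Q (j.val + 1) (Function.update a j x) - Qpre π Q j.val a)))
    (μc : (j : Fin n) → ((i : Fin n) → A i) → A j → ℝ)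
    (hμc : ∀ j a x, μc j a x = π j x *
        Real.exp (η * (Qpre π Q (j.val + 1) (Function.update a j x) - Qpre π Q j.val a)) /
        z j a)
    (π' : (j : Fin n) → A j → ℝ) (hπ' : ∀ j, IsProbDist (π' j))
    (hmin : ∀ j, ∀ p : A j → ℝ, IsProbDist p →
      (∑ a : (i : Fin n) → A i, (∏ i, π' i (a i)) * KL (π' j) (μc j a)) ≤
      (∑ a : (i : Fin n) → A i, (∏ i, π' i (a i)) * KL p (μc j a))) :
    ∀ j, ∀ p : A j → ℝ, IsProbDist p →
      (∑ a : (i : Fin n) → A i, (∏ i, π' i (a i)) *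
          ∑ x : A j, p x *
            (Qpre π Q (j.val + 1) (Function.update a j x) - Qpre π Q j.val a))
        - (1 / η) * KL p (π j)
      ≤ (∑ a : (i : Fin n) → A i, (∏ i, π' i (a i)) *
          ∑ x : A j, π' j x *
            (Qpre π Q (j.val + 1) (Function.update a j x) - Qpre π Q j.val a))
        - (1 / η) * KL (π' j) (π j) := by

  intro j p hp
  set Adv : ((i : Fin n) → A i) → A j → ℝ := fun a x =>
    Qpre π Q (j.val + 1) (Function.update a j x) - Qpre π Q j.val a with hAdv
  set w : ((i : Fin n) → A i) → ℝ := fun a => ∏ i, π' i (a i) with hw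
  have hzpos : ∀ a, 0 < z j a := by
    intro a
    rw [hz]
    have hne : Nonempty (A j) := by
      by_contra h
      rw [not_nonempty_iff] at h
      have h1 := (hπ j).2
      simp at h1
    apply Finset.sum_pos
    · intro x _
      exact mul_pos ((hπ j).1 x) (Real.exp_pos _)
    · exact Finset.univ_nonempty
  have hwsum : ∑ a : (i : Fin n) → A i, w a = 1 := by
    rw [show (∑ a : (i : Fin n) → A i, w a) = ∏ i, ∑ x : A i, π' i x from
      (Finset.prod_univ_sum _ _).symm]
    simp [(hπ' _).2]
  -- pointwise KL identity
  have key : ∀ (q : A j → ℝ), IsProbDist q →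
      ∑ a : (i : Fin n) → A i, w a * KL q (μc j a) =
      (∑ a : (i : Fin n) → A i, w a * Real.log (z j a)) + KL q (π j)
        - η * ∑ a : (i : Fin n) → A i, w a * ∑ x, q x * Adv a x := by
    intro q hq
    have hpt : ∀ a, KL q (μc j a) =
        Real.log (z j a) + KL q (π j) - η * ∑ x, q x * Adv a x := by
      intro a
      have : ∀ x : A j, q x * Real.log (q x / μc j a x) =
          q x * Real.log (z j a) + q x * Real.log (q x / π j x) - η * (q x * Adv a x) := by
        intro x
        rcases eq_or_lt_of_le (hq.1 x) with h0 | h0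
        · simp [← h0]
        · have hπx := (hπ j).1 x
          rw [hμc]
          have hzne : z j a ≠ 0 := ne_of_gt (hzpos a)
          have hπne : π j x ≠ 0 := ne_of_gt hπx
          have hexp : Real.exp (η * Adv a x) ≠ 0 := Real.exp_ne_zero _
          have hql : Real.log (q x / π j x) = Real.log (q x) - Real.log (π j x) :=
            Real.log_div (ne_of_gt h0) hπne
          rw [div_div_eq_mul_div, Real.log_div (by positivity) (mul_ne_zero hπne hexp),
            Real.log_mul (ne_of_gt h0) hzne, Real.log_mul hπne hexp, Real.log_exp, hql]
          ring
      unfold KL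
      rw [Finset.sum_congr rfl (fun x _ => this x), Finset.sum_sub_distrib,
        Finset.sum_add_distrib, ← Finset.sum_mul, ← Finset.mul_sum, hq.2]
      ring
    rw [Finset.sum_congr rfl (fun a _ => by rw [hpt a])]
    have : ∀ a : (i : Fin n) → A i,
        w a * (Real.log (z j a) + KL q (π j) - η * ∑ x, q x * Adv a x) =
        w a * Real.log (z j a) + w a * KL q (π j) - η * (w a * ∑ x, q x * Adv a x) := by
      intro a; ring
    rw [Finset.sum_congr rfl (fun a _ => this a), Finset.sum_sub_distrib,
      Finset.sum_add_distrib, ← Finset.sum_mul, hwsum, ← Finset.mul_sum]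
    ring
  have h1 := key p hp
  have h2 := key (π' j) (hπ' j)
  have hm := hmin j p hp
  rw [h1, h2] at hm
  have hstep : η * (∑ a : (i : Fin n) → A i, w a * ∑ x, p x * Adv a x)
      - KL p (π j) ≤ η * (∑ a : (i : Fin n) → A i, w a * ∑ x, π' j x * Adv a x)
      - KL (π' j) (π j) := by linarith
  have hη' : 0 < 1 / η := by positivity
  have := mul_le_mul_of_nonneg_left hstep (le_of_lt hη')
  have hne : η ≠ 0 := ne_of_gt hη
  calc (∑ a : (i : Fin n) → A i, w a * ∑ x, p x * Adv a x) - (1/η) * KL p (π j)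
      = (1/η) * (η * (∑ a : (i : Fin n) → A i, w a * ∑ x, p x * Adv a x) - KL p (π j)) := by
        field_simp
    _ ≤ (1/η) * (η * (∑ a : (i : Fin n) → A i, w a * ∑ x, π' j x * Adv a x) - KL (π' j) (π j)) := this
    _ = (∑ a : (i : Fin n) → A i, w a * ∑ x, π' j x * Adv a x) - (1/η) * KL (π' j) (π j) := by
        field_simp
end
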